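/- Let A be a G-graded ring. Then A is epsilon-strongly graded if and only if supp(A) is closed under inversion and for every g ∈ supp(A) there exists a nonzero idempotent ε_g ∈ A_g A_{g⁻¹} such that ε_g a = a = a ε_{g⁻¹} for all a ∈ A_g. -/

import Mathlib

/-- A `G`-grading on a unital ring `A`: a family of additive subgroups with
`A_g A_h ⊆ A_{gh}`, `1 ∈ A₁`, whose internal direct sum is `A`. -/
structure RingGrading (G : Type*) [Group G] [DecidableEq G]
    (A : Type*) [Ring A] where
  comp : G → AddSubgroup A
  one_mem : (1 : A) ∈ comp 1
  mul_mem : ∀ ⦃g h : G⦄ ⦃a b : A⦄, a ∈ comp g → b ∈ comp h → a * b ∈ comp (g * h)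
  isInternal : DirectSum.IsInternal comp

variable {G : Type*} [Group G] [DecidableEq G] {A : Type*} [Ring A]

/-- The additive subgroup `S T` generated by products of elements of `S` and `T`. -/
def sgMul (S T : AddSubgroup A) : AddSubgroup A :=
  AddSubgroup.closure {x : A | ∃ s ∈ S, ∃ t ∈ T, x = s * t}

/-- `ε` is a family of epsilon-elements for the grading `𝒜`:
`ε_g ∈ A_g A_{g⁻¹}` and `ε_g a = a = a ε_{g⁻¹}` for all `a ∈ A_g`. -/
structure IsEpsilonFamily (𝒜 : RingGrading G A) (ε : G → A) : Prop where
  mem : ∀ g : G, ε g ∈ sgMul (𝒜.comp g) (𝒜.comp g⁻¹)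
  mul_left : ∀ g : G, ∀ a ∈ 𝒜.comp g, ε g * a = a
  mul_right : ∀ g : G, ∀ a ∈ 𝒜.comp g, a * ε g⁻¹ = a

/-- `𝒜` is an epsilon-strongly graded ring. -/
def IsEpsilonStrong (𝒜 : RingGrading G A) : Prop :=
  ∃ ε : G → A, IsEpsilonFamily 𝒜 ε

lemma epsAux_left_id (𝒜 : RingGrading G A) {e : A} {g : G}
    (hl : ∀ a ∈ 𝒜.comp g, e * a = a) {x : A}
    (hx : x ∈ sgMul (𝒜.comp g) (𝒜.comp g⁻¹)) : e * x = x := by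
  induction hx using AddSubgroup.closure_induction with
  | mem y hy =>
      obtain ⟨s, hs, t, ht, rfl⟩ := hy
      rw [← mul_assoc, hl s hs]
  | zero => simp
  | add a b _ _ ha hb => rw [mul_add, ha, hb]
  | neg a _ ha => rw [mul_neg, ha]

lemma sgMul_bot_left (T : AddSubgroup A) : sgMul (⊥ : AddSubgroup A) T = ⊥ := by
  apply le_antisymm _ bot_le
  rw [sgMul, AddSubgroup.closure_le]
  rintro x ⟨s, hs, t, ht, rfl⟩
  rw [AddSubgroup.mem_bot] at hs
  simp [hs]

/-- A graded ring is epsilon-strongly graded iff its support is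
closed under inversion and for every `g` in the support there is a nonzero idempotent
`ε_g ∈ A_g A_{g⁻¹}` with `ε_g a = a = a ε_{g⁻¹}` for all `a ∈ A_g`. -/
theorem isEpsilonStrong_iff_support (𝒜 : RingGrading G A) :
    IsEpsilonStrong 𝒜 ↔
      ((∀ g : G, 𝒜.comp g ≠ ⊥ → 𝒜.comp g⁻¹ ≠ ⊥) ∧
        ∃ ε : G → A, ∀ g : G, 𝒜.comp g ≠ ⊥ →
          ε g ≠ 0 ∧ ε g * ε g = ε g ∧ ε g ∈ sgMul (𝒜.comp g) (𝒜.comp g⁻¹) ∧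
            ∀ a ∈ 𝒜.comp g, ε g * a = a ∧ a * ε g⁻¹ = a) := by
  constructor
  · rintro ⟨ε, hε⟩
    have hne : ∀ g : G, 𝒜.comp g ≠ ⊥ → ε g ≠ 0 := by
      intro g hg he
      obtain ⟨a, ha, ha0⟩ : ∃ a ∈ 𝒜.comp g, a ≠ 0 := by
        by_contra h
        push_neg at h
        exact hg ((AddSubgroup.eq_bot_iff_forall _).2 h)
      have := hε.mul_left g a ha
      rw [he, zero_mul] at this
      exact ha0 this.symm
    refine ⟨?_, ε, ?_⟩
    · intro g hg hginv
      have : ε g⁻¹ ∈ sgMul (𝒜.comp g⁻¹) (𝒜.comp g⁻¹⁻¹) := hε.mem g⁻¹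
      rw [hginv, sgMul_bot_left, AddSubgroup.mem_bot] at this
      obtain ⟨a, ha, ha0⟩ : ∃ a ∈ 𝒜.comp g, a ≠ 0 := by
        by_contra h
        push_neg at h
        exact hg ((AddSubgroup.eq_bot_iff_forall _).2 h)
      have h2 := hε.mul_right g a ha
      rw [this, mul_zero] at h2
      exact ha0 h2.symm
    · intro g hg
      refine ⟨hne g hg, ?_, hε.mem g, fun a ha => ⟨hε.mul_left g a ha, hε.mul_right g a ha⟩⟩
      exact epsAux_left_id 𝒜 (hε.mul_left g) (hε.mem g)
  · rintro ⟨hinv, ε, hε⟩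
    classical
    refine ⟨fun g => if h : 𝒜.comp g ≠ ⊥ then ε g else 0, ?_, ?_, ?_⟩
    · intro g
      by_cases h : 𝒜.comp g ≠ ⊥
      · rw [dif_pos h]; exact (hε g h).2.2.1
      · rw [dif_neg h]; exact zero_mem _
    · intro g a ha
      by_cases h : 𝒜.comp g ≠ ⊥
      · rw [dif_pos h]; exact ((hε g h).2.2.2 a ha).1
      · push_neg at h
        rw [dif_neg (by simpa using h)]
        have : a = 0 := by rw [h, AddSubgroup.mem_bot] at ha; exact ha
        rw [this, mul_zero]
    · intro g a ha
      by_cases h : 𝒜.comp g ≠ ⊥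
      · rw [dif_pos (hinv g h)]; exact ((hε g h).2.2.2 a ha).2
      · push_neg at h
        have : a = 0 := by rw [h, AddSubgroup.mem_bot] at ha; exact ha
        rw [this, zero_mul]
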